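/- Let 0 ≤ μ ≤ 2 and let C be any bivariate copula. Then μ·ψ(C) + ξ(C) ≥ μ·(−2v₁² + 6v₁ − 5 + 1/v₁) + (−4v₁² + 20v₁ − 17 + 2/v₁ − 1/v₁² − 12·ln(v₁)), where v₁ = 2/(2+μ). -/

import Mathlib

/-!
For fixed `v`, the slice `g = ∂₁C(·, v)` takes values in `[0, 1]` on `(0, 1)`, and since `C(·, v)`
is Lipschitz, `∫₀ᵛ g = C(v, v)` and `∫₀¹ g = v`. Minimising `μ ∫₀ᵛ g + ∫₀¹ g²` under these
constraints is a convex problem: a Lagrange multiplier for the mean constraint reduces it to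
minimising a quadratic pointwise, so the minimiser is constant on `(0, v)` and on `(v, 1)`, with the
values taken by `∂₁C↘_μ(·, v)`. Integrating this pointwise bound over `v` and evaluating the
integral separately on `v ≤ 1 - v₁`, `1 - v₁ ≤ v ≤ v₁` and `v₁ ≤ v` gives the estimate.
-/

open MeasureTheory Set

noncomputable section

def IsCopula (C : ℝ → ℝ → ℝ) : Prop :=
  (∀ u ∈ Icc (0:ℝ) 1, ∀ v ∈ Icc (0:ℝ) 1, C u v ∈ Icc (0:ℝ) 1) ∧
  (∀ u ∈ Icc (0:ℝ) 1, C u 0 = 0 ∧ C u 1 = u) ∧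
  (∀ v ∈ Icc (0:ℝ) 1, C 0 v = 0 ∧ C 1 v = v) ∧
  (∀ u₁ ∈ Icc (0:ℝ) 1, ∀ u₂ ∈ Icc (0:ℝ) 1, ∀ v₁ ∈ Icc (0:ℝ) 1, ∀ v₂ ∈ Icc (0:ℝ) 1,
    u₁ ≤ u₂ → v₁ ≤ v₂ → 0 ≤ C u₂ v₂ - C u₁ v₂ - C u₂ v₁ + C u₁ v₁)

/-- The (a.e. defined) partial derivative of `C` with respect to its first argument. -/
def d1 (C : ℝ → ℝ → ℝ) (t v : ℝ) : ℝ := deriv (fun s => C s v) t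

/-- Chatterjee's rank correlation. -/
def xi (C : ℝ → ℝ → ℝ) : ℝ :=
  6 * (∫ v in (0:ℝ)..1, ∫ t in (0:ℝ)..1, (d1 C t v) ^ 2) - 2

/-- Spearman's footrule. -/
def psi (C : ℝ → ℝ → ℝ) : ℝ :=
  6 * (∫ v in (0:ℝ)..1, C v v) - 2

/-- Stochastically increasing: for each `v`, `t ↦ ∂₁C(t,v)` agrees a.e. on `[0,1]`
with a non-increasing function. -/
def IsSI (C : ℝ → ℝ → ℝ) : Prop :=
  ∀ v ∈ Icc (0:ℝ) 1, ∃ g : ℝ → ℝ, AntitoneOn g (Icc (0:ℝ) 1) ∧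
    (∀ᵐ t ∂(volume.restrict (Icc (0:ℝ) 1)), d1 C t v = g t)

open Filter Topology Function intervalIntegral

lemma LipschitzOnWith.of_monotoneOn_of_sub_le {f : ℝ → ℝ} {s : Set ℝ} (hf : MonotoneOn f s)
    (h : ∀ x ∈ s, ∀ y ∈ s, x ≤ y → f y - f x ≤ y - x) : LipschitzOnWith 1 f s := by
  refine LipschitzOnWith.of_dist_le_mul fun x hx y hy => ?_
  simp only [Real.dist_eq, NNReal.coe_one, one_mul]
  rcases le_total x y with hxy | hyx
  · rw [abs_sub_comm, abs_of_nonneg (sub_nonneg.2 (hf hx hy hxy)), abs_sub_comm,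
      abs_of_nonneg (sub_nonneg.2 hxy)]
    exact h x hx y hy hxy
  · rw [abs_of_nonneg (sub_nonneg.2 (hf hy hx hyx)), abs_of_nonneg (sub_nonneg.2 hyx)]
    exact h y hy x hx hyx

lemma deriv_mem_Icc_of_monotoneOn_of_lipschitzOnWith {f : ℝ → ℝ} {s : Set ℝ} {x : ℝ}
    (hs : s ∈ 𝓝 x) (hmono : MonotoneOn f s) (hlip : LipschitzOnWith 1 f s) :
    deriv f x ∈ Icc (0:ℝ) 1 :=
  ⟨derivWithin_of_mem_nhds (f := f) hs ▸ hmono.derivWithin_nonneg,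
    (le_abs_self _).trans (by simpa using norm_deriv_le_of_lipschitzOn hs hlip)⟩

namespace IsCopula

variable {C : ℝ → ℝ → ℝ}

lemma monotoneOn_left (hC : IsCopula C) {v : ℝ} (hv : v ∈ Icc (0:ℝ) 1) :
    MonotoneOn (C · v) (Icc 0 1) := fun u₁ h₁ u₂ h₂ h => by
  have := hC.2.2.2 u₁ h₁ u₂ h₂ 0 ⟨le_rfl, zero_le_one⟩ v hv h hv.1
  linarith [(hC.2.1 u₁ h₁).1, (hC.2.1 u₂ h₂).1]

lemma monotoneOn_right (hC : IsCopula C) {u : ℝ} (hu : u ∈ Icc (0:ℝ) 1) :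
    MonotoneOn (C u ·) (Icc 0 1) := fun v₁ h₁ v₂ h₂ h => by
  have := hC.2.2.2 0 ⟨le_rfl, zero_le_one⟩ u hu v₁ h₁ v₂ h₂ hu.1 h
  linarith [(hC.2.2.1 v₁ h₁).1, (hC.2.2.1 v₂ h₂).1]

lemma lipschitzOnWith_left (hC : IsCopula C) {v : ℝ} (hv : v ∈ Icc (0:ℝ) 1) :
    LipschitzOnWith 1 (C · v) (Icc 0 1) :=
  .of_monotoneOn_of_sub_le (hC.monotoneOn_left hv) fun u₁ h₁ u₂ h₂ h => by
    have := hC.2.2.2 u₁ h₁ u₂ h₂ v hv 1 ⟨zero_le_one, le_rfl⟩ h hv.2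
    linarith [(hC.2.1 u₁ h₁).2, (hC.2.1 u₂ h₂).2]

lemma lipschitzOnWith_right (hC : IsCopula C) {u : ℝ} (hu : u ∈ Icc (0:ℝ) 1) :
    LipschitzOnWith 1 (C u ·) (Icc 0 1) :=
  .of_monotoneOn_of_sub_le (hC.monotoneOn_right hu) fun v₁ h₁ v₂ h₂ h => by
    have := hC.2.2.2 u hu 1 ⟨zero_le_one, le_rfl⟩ v₁ h₁ v₂ h₂ hu.2 h
    linarith [(hC.2.2.1 v₁ h₁).2, (hC.2.2.1 v₂ h₂).2]

lemma continuousOn_uncurry (hC : IsCopula C) : ContinuousOn (uncurry C) (Icc 0 1 ×ˢ Icc 0 1) :=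
  continuousOn_prod_of_continuousOn_lipschitzOnWith _ 1
    (fun _ hu => (hC.lipschitzOnWith_right hu).continuousOn) fun _ hv => hC.lipschitzOnWith_left hv

lemma d1_mem_Icc (hC : IsCopula C) {t v : ℝ} (ht : t ∈ Ioo (0:ℝ) 1) (hv : v ∈ Icc (0:ℝ) 1) :
    d1 C t v ∈ Icc (0:ℝ) 1 :=
  deriv_mem_Icc_of_monotoneOn_of_lipschitzOnWith (Icc_mem_nhds ht.1 ht.2)
    (hC.monotoneOn_left hv) (hC.lipschitzOnWith_left hv)

lemma integral_d1 (hC : IsCopula C) {x v : ℝ} (hx : x ∈ Icc (0:ℝ) 1) (hv : v ∈ Icc (0:ℝ) 1) :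
    ∫ t in (0:ℝ)..x, d1 C t v = C x v := by
  have hsub : uIcc 0 x ⊆ Icc 0 1 := by
    rw [uIcc_of_le hx.1]; exact Icc_subset_Icc_right hx.2
  rw [show (fun t => d1 C t v) = deriv (C · v) from rfl,
    ((hC.lipschitzOnWith_left hv).mono hsub).absolutelyContinuousOnInterval.integral_deriv_eq_sub,
    (hC.2.2.1 v hv).1, sub_zero]

lemma intervalIntegrable_d1 (hC : IsCopula C) {v : ℝ} (hv : v ∈ Icc (0:ℝ) 1) :
    IntervalIntegrable (d1 C · v) volume 0 1 :=
  (uIcc_of_le (zero_le_one' ℝ) ▸ hC.lipschitzOnWith_left hv).absolutelyContinuousOnInterval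
    |>.intervalIntegrable_deriv

end IsCopula

lemma isMinOn_sq_add_mul_Icc {s y : ℝ} (h : ∀ x ∈ Icc (0:ℝ) 1, 0 ≤ (2 * y + s) * (x - y)) :
    IsMinOn (fun x => x ^ 2 + s * x) (Icc 0 1) y :=
  isMinOn_iff.2 fun x hx => by nlinarith [h x hx, sq_nonneg (x - y)]

lemma mul_le_integral_of_isMinOn {φ g : ℝ → ℝ} {K : Set ℝ} {a p q : ℝ} (hpq : p ≤ q)
    (hφg : IntervalIntegrable (fun t => φ (g t)) volume p q) (hg : MapsTo g (Ioo p q) K)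
    (ha : IsMinOn φ K a) : (q - p) * φ a ≤ ∫ t in p..q, φ (g t) := by
  simpa using integral_mono_on_of_le_Ioo hpq intervalIntegrable_const hφg fun t ht => ha (hg ht)

lemma IntervalIntegrable.sq_of_mapsTo_Icc {g : ℝ → ℝ} {p q : ℝ} (hpq : p ≤ q)
    (hg : IntervalIntegrable g volume p q) (hgb : MapsTo g (Ioo p q) (Icc 0 1)) :
    IntervalIntegrable (fun t => g t ^ 2) volume p q := by
  rw [intervalIntegrable_iff_integrableOn_Ioo_of_le hpq] at hg ⊢
  simp only [sq]
  refine hg.mul_bdd hg.aestronglyMeasurable (c := 1) <|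
    ae_restrict_of_forall_mem measurableSet_Ioo fun t ht => ?_
  rw [Real.norm_eq_abs, abs_le]
  exact ⟨by linarith [(hgb ht).1], (hgb ht).2⟩

/-- Weak duality, with `l` a Lagrange multiplier for the constraint `∫₀¹ g = v`. -/
theorem le_mul_integral_add_integral_sq {g : ℝ → ℝ} {μ v a b l : ℝ} (hv : v ∈ Icc (0:ℝ) 1)
    (hgb : MapsTo g (Ioo 0 1) (Icc 0 1)) (hg : IntervalIntegrable g volume 0 1)
    (hmean : ∫ t in (0:ℝ)..1, g t = v)
    (ha : IsMinOn (fun x => x ^ 2 + (μ + l) * x) (Icc 0 1) a)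
    (hb : IsMinOn (fun x => x ^ 2 + l * x) (Icc 0 1) b) (hab : a * v + b * (1 - v) = v) :
    v * a ^ 2 + (1 - v) * b ^ 2 + μ * a * v ≤
      μ * (∫ t in (0:ℝ)..v, g t) + ∫ t in (0:ℝ)..1, g t ^ 2 := by
  have hg2 := hg.sq_of_mapsTo_Icc zero_le_one hgb
  have hsub₁ : uIcc 0 v ⊆ uIcc (0:ℝ) 1 := uIcc_subset_uIcc_left (by simpa [uIcc_of_le] using hv)
  have hsub₂ : uIcc v 1 ⊆ uIcc (0:ℝ) 1 := uIcc_subset_uIcc_right (by simpa [uIcc_of_le] using hv)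
  have h₁ := mul_le_integral_of_isMinOn hv.1
    ((hg2.mono_set hsub₁).add ((hg.mono_set hsub₁).const_mul (μ + l)))
    (hgb.mono_left (Ioo_subset_Ioo_right hv.2)) ha
  have h₂ := mul_le_integral_of_isMinOn hv.2
    ((hg2.mono_set hsub₂).add ((hg.mono_set hsub₂).const_mul l))
    (hgb.mono_left (Ioo_subset_Ioo_left hv.1)) hb
  rw [integral_add (hg2.mono_set hsub₁) ((hg.mono_set hsub₁).const_mul _),
    intervalIntegral.integral_const_mul] at h₁
  rw [integral_add (hg2.mono_set hsub₂) ((hg.mono_set hsub₂).const_mul _),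
    intervalIntegral.integral_const_mul] at h₂
  have hsplit := integral_add_adjacent_intervals (hg.mono_set hsub₁) (hg.mono_set hsub₂)
  have hsplit₂ := integral_add_adjacent_intervals (hg2.mono_set hsub₁) (hg2.mono_set hsub₂)
  rw [hmean] at hsplit
  linear_combination h₁ + h₂ - l * hab + l * hsplit + hsplit₂

/- For the extremal copula `C↘_μ` and fixed `v`, `t ↦ ∂₁C↘_μ(t, v)` is the constant
`extremalSlopeBelow μ v` on `(0, v)` and `extremalSlopeAbove μ v` on `(v, 1)`, so that
`extremalIntegrand μ v = μ C↘_μ(v, v) + ∫₀¹ (∂₁C↘_μ(t, v))² dt`. -/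
def extremalSlopeBelow (μ v : ℝ) : ℝ :=
  if v ≤ μ / (2 + μ) then 0 else if v ≤ 2 / (2 + μ) then (v * (2 + μ) - μ) / 2 else (2 * v - 1) / v

def extremalSlopeAbove (μ v : ℝ) : ℝ :=
  if v ≤ μ / (2 + μ) then v / (1 - v) else if v ≤ 2 / (2 + μ) then v * (2 + μ) / 2 else 1

def extremalIntegrand (μ v : ℝ) : ℝ :=
  v * extremalSlopeBelow μ v ^ 2 + (1 - v) * extremalSlopeAbove μ v ^ 2 +
    μ * extremalSlopeBelow μ v * v

theorem exists_isMinOn_extremalSlopes {μ : ℝ} (hμ : μ ∈ Icc (0:ℝ) 2) (v : ℝ) : ∃ l : ℝ,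
      IsMinOn (fun x => x ^ 2 + (μ + l) * x) (Icc 0 1) (extremalSlopeBelow μ v) ∧
      IsMinOn (fun x => x ^ 2 + l * x) (Icc 0 1) (extremalSlopeAbove μ v) ∧
      extremalSlopeBelow μ v * v + extremalSlopeAbove μ v * (1 - v) = v := by
  obtain ⟨hμ0, hμ2⟩ := hμ
  have hk : 0 < 2 + μ := by linarith
  simp only [extremalSlopeBelow, extremalSlopeAbove]
  split_ifs with h₁ h₂
  · have hvμ : v * (2 + μ) ≤ μ := (le_div_iff₀ hk).1 h₁
    have h1v : 0 < 1 - v := by nlinarith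
    have hB : v / (1 - v) ≤ μ / 2 := by rw [div_le_div_iff₀ h1v two_pos]; linarith
    refine ⟨-(2 * (v / (1 - v))), isMinOn_sq_add_mul_Icc fun x hx => ?_,
      isMinOn_sq_add_mul_Icc fun x _ => le_of_eq (by ring), by field_simp; ring⟩
    nlinarith [hx.1]
  · refine ⟨-(v * (2 + μ)), isMinOn_sq_add_mul_Icc fun x _ => le_of_eq (by ring),
      isMinOn_sq_add_mul_Icc fun x _ => le_of_eq (by ring), by ring⟩
  · have hvμ : 2 < v * (2 + μ) := (div_lt_iff₀ hk).1 (not_le.1 h₂)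
    have hv0 : 0 < v := by nlinarith
    have hA : 2 - μ - 2 * ((2 * v - 1) / v) ≤ 0 := by
      rw [show 2 - μ - 2 * ((2 * v - 1) / v) = (2 - v * (2 + μ)) / v by field_simp; ring]
      exact div_nonpos_of_nonpos_of_nonneg (by linarith) hv0.le
    refine ⟨-(μ + 2 * ((2 * v - 1) / v)), isMinOn_sq_add_mul_Icc fun x _ => le_of_eq (by ring),
      isMinOn_sq_add_mul_Icc fun x hx => ?_, by field_simp; ring⟩
    nlinarith [hx.2]

lemma integral_eq_sub_of_eqOn_Ioo {f g G : ℝ → ℝ} {a b : ℝ} (hab : a ≤ b)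
    (hfg : EqOn f g (Ioo a b)) (hG : ∀ x ∈ Icc a b, HasDerivAt G (g x) x)
    (hg : ContinuousOn g (Icc a b)) :
    IntervalIntegrable f volume a b ∧ ∫ x in a..b, f x = G b - G a := by
  have hgi := hg.intervalIntegrable_of_Icc (μ := volume) hab
  exact ⟨hgi.congr_uIoo (uIoo_of_le hab ▸ hfg.symm), (integral_congr_Ioo_of_le hab hfg).trans
    (integral_eq_sub_of_hasDerivAt (uIcc_of_le hab ▸ hG) hgi)⟩

section extremalIntegrand

variable {μ : ℝ}

lemma integral_extremalIntegrand_lower (hμ : μ ∈ Icc (0:ℝ) 2) :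
    IntervalIntegrable (extremalIntegrand μ) volume 0 (μ / (2 + μ)) ∧
      ∫ v in (0:ℝ)..μ / (2 + μ), extremalIntegrand μ v =
        -(μ / (2 + μ)) ^ 2 / 2 - μ / (2 + μ) - Real.log (1 - μ / (2 + μ)) := by
  have hk : 0 < 2 + μ := by linarith [hμ.1]
  have h1v : ∀ v ∈ Icc 0 (μ / (2 + μ)), 1 - v ≠ 0 := fun v hv => by
    linarith [hv.2, (div_lt_one hk).2 (by linarith : μ < 2 + μ)]
  have heq : EqOn (extremalIntegrand μ) (fun v => v ^ 2 / (1 - v)) (Ioo 0 (μ / (2 + μ))) :=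
    fun v hv => by
      have := h1v v (Ioo_subset_Icc_self hv)
      simp only [extremalIntegrand, extremalSlopeBelow, extremalSlopeAbove, if_pos hv.2.le]
      field_simp
      ring
  have hderiv : ∀ v ∈ Icc 0 (μ / (2 + μ)),
      HasDerivAt (fun v => -v ^ 2 / 2 - v - Real.log (1 - v)) (v ^ 2 / (1 - v)) v := by
    intro v hv
    refine (((hasDerivAt_pow 2 v).neg.div_const 2).sub (hasDerivAt_id v)).sub
      (((hasDerivAt_id v).const_sub 1).log (h1v v hv)) |>.congr_deriv ?_
    have := h1v v hv
    simp only [id]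
    field_simp
    ring
  simpa using integral_eq_sub_of_eqOn_Ioo (div_nonneg hμ.1 hk.le) heq hderiv
    (continuousOn_pow 2 |>.div (continuousOn_const.sub continuousOn_id) h1v)

lemma integral_extremalIntegrand_middle (hμ : μ ∈ Icc (0:ℝ) 2) :
    IntervalIntegrable (extremalIntegrand μ) volume (μ / (2 + μ)) (2 / (2 + μ)) ∧
      ∫ v in μ / (2 + μ)..2 / (2 + μ), extremalIntegrand μ v =
        ((2 + μ) ^ 2 * (2 / (2 + μ)) ^ 3 / 3 - μ ^ 2 * (2 / (2 + μ)) ^ 2 / 2) / 4 -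
          ((2 + μ) ^ 2 * (μ / (2 + μ)) ^ 3 / 3 - μ ^ 2 * (μ / (2 + μ)) ^ 2 / 2) / 4 := by
  have hk : 0 < 2 + μ := by linarith [hμ.1]
  have heq : EqOn (extremalIntegrand μ) (fun v => ((2 + μ) ^ 2 * v ^ 2 - μ ^ 2 * v) / 4)
      (Ioo (μ / (2 + μ)) (2 / (2 + μ))) := fun v hv => by
    simp only [extremalIntegrand, extremalSlopeBelow, extremalSlopeAbove, if_neg (not_le.2 hv.1),
      if_pos hv.2.le]
    ring
  have hderiv : ∀ v ∈ Icc (μ / (2 + μ)) (2 / (2 + μ)),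
      HasDerivAt (fun v => ((2 + μ) ^ 2 * v ^ 3 / 3 - μ ^ 2 * v ^ 2 / 2) / 4)
        (((2 + μ) ^ 2 * v ^ 2 - μ ^ 2 * v) / 4) v := by
    intro v _
    refine ((((hasDerivAt_pow 3 v).const_mul ((2 + μ) ^ 2)).div_const 3).sub
      (((hasDerivAt_pow 2 v).const_mul (μ ^ 2)).div_const 2)).div_const 4 |>.congr_deriv ?_
    push_cast
    ring
  exact integral_eq_sub_of_eqOn_Ioo (div_le_div_of_nonneg_right hμ.2 hk.le) heq hderiv
    (by fun_prop)

lemma integral_extremalIntegrand_upper (hμ : μ ∈ Icc (0:ℝ) 2) :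
    IntervalIntegrable (extremalIntegrand μ) volume (2 / (2 + μ)) 1 ∧
      ∫ v in 2 / (2 + μ)..1, extremalIntegrand μ v =
        (3 + 2 * μ) / 2 - (3 + μ) - ((3 + 2 * μ) * (2 / (2 + μ)) ^ 2 / 2 -
          (3 + μ) * (2 / (2 + μ)) + Real.log (2 / (2 + μ))) := by
  have hk : 0 < 2 + μ := by linarith [hμ.1]
  have hv0 : ∀ v ∈ Icc (2 / (2 + μ)) 1, v ≠ 0 := fun v hv =>
    (lt_of_lt_of_le (by positivity) hv.1).ne'
  have hle : μ / (2 + μ) ≤ 2 / (2 + μ) := div_le_div_of_nonneg_right hμ.2 hk.le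
  have heq : EqOn (extremalIntegrand μ) (fun v => (3 + 2 * μ) * v - (3 + μ) + 1 / v)
      (Ioo (2 / (2 + μ)) 1) := fun v hv => by
    have := hv0 v (Ioo_subset_Icc_self hv)
    simp only [extremalIntegrand, extremalSlopeBelow, extremalSlopeAbove,
      if_neg (not_le.2 hv.1), if_neg (not_le.2 (hle.trans_lt hv.1))]
    field_simp
    ring
  have hderiv : ∀ v ∈ Icc (2 / (2 + μ)) 1,
      HasDerivAt (fun v => (3 + 2 * μ) * v ^ 2 / 2 - (3 + μ) * v + Real.log v)
        ((3 + 2 * μ) * v - (3 + μ) + 1 / v) v := by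
    intro v hv
    refine ((((hasDerivAt_pow 2 v).const_mul (3 + 2 * μ)).div_const 2).sub
      ((hasDerivAt_id v).const_mul (3 + μ))).add (Real.hasDerivAt_log (hv0 v hv)) |>.congr_deriv ?_
    push_cast
    ring
  simpa using integral_eq_sub_of_eqOn_Ioo ((div_le_one hk).2 (by linarith [hμ.1])) heq hderiv
    ((continuousOn_const.mul continuousOn_id).sub continuousOn_const |>.add
      (continuousOn_const.div continuousOn_id hv0))

lemma intervalIntegrable_extremalIntegrand (hμ : μ ∈ Icc (0:ℝ) 2) :
    IntervalIntegrable (extremalIntegrand μ) volume 0 1 :=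
  ((integral_extremalIntegrand_lower hμ).1.trans (integral_extremalIntegrand_middle hμ).1).trans
    (integral_extremalIntegrand_upper hμ).1

theorem integral_extremalIntegrand (hμ : μ ∈ Icc (0:ℝ) 2) :
    6 * (∫ v in (0:ℝ)..1, extremalIntegrand μ v) - 2 * μ - 2 =
      μ * (-2 * (2 / (2 + μ)) ^ 2 + 6 * (2 / (2 + μ)) - 5 + 1 / (2 / (2 + μ))) +
        (-4 * (2 / (2 + μ)) ^ 2 + 20 * (2 / (2 + μ)) - 17 + 2 / (2 / (2 + μ))
          - 1 / (2 / (2 + μ)) ^ 2 - 12 * Real.log (2 / (2 + μ))) := by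
  obtain ⟨hi₁, he₁⟩ := integral_extremalIntegrand_lower hμ
  obtain ⟨hi₂, he₂⟩ := integral_extremalIntegrand_middle hμ
  obtain ⟨hi₃, he₃⟩ := integral_extremalIntegrand_upper hμ
  have hk : 2 + μ ≠ 0 := by linarith [hμ.1]
  rw [← integral_add_adjacent_intervals (hi₁.trans hi₂) hi₃,
    ← integral_add_adjacent_intervals hi₁ hi₂, he₁, he₂, he₃,
    show 1 - μ / (2 + μ) = 2 / (2 + μ) by field_simp; ring]
  field_simp
  ring

end extremalIntegrand

namespace IsCopula

variable {C : ℝ → ℝ → ℝ}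

theorem extremalIntegrand_le (hC : IsCopula C) {μ v : ℝ} (hμ : μ ∈ Icc (0:ℝ) 2)
    (hv : v ∈ Icc (0:ℝ) 1) : extremalIntegrand μ v ≤ μ * C v v + ∫ t in (0:ℝ)..1, d1 C t v ^ 2 := by
  obtain ⟨l, ha, hb, hab⟩ := exists_isMinOn_extremalSlopes hμ v
  have hmean : ∫ t in (0:ℝ)..1, d1 C t v = v := by
    rw [hC.integral_d1 ⟨zero_le_one, le_rfl⟩ hv, (hC.2.2.1 v hv).2]
  have := le_mul_integral_add_integral_sq hv (fun t ht => hC.d1_mem_Icc ht hv)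
    (hC.intervalIntegrable_d1 hv) hmean ha hb hab
  rwa [hC.integral_d1 hv hv] at this

lemma monotoneOn_diag (hC : IsCopula C) : MonotoneOn (fun v => C v v) (Icc 0 1) :=
  fun _ hv _ hw hvw => (hC.monotoneOn_left hv hv hw hvw).trans (hC.monotoneOn_right hw hv hw hvw)

lemma norm_integral_d1_sq_le (hC : IsCopula C) {v : ℝ} (hv : v ∈ Icc (0:ℝ) 1) :
    ‖∫ t in (0:ℝ)..1, d1 C t v ^ 2‖ ≤ 1 := by
  simpa using norm_integral_le_of_norm_le_const_ae (a := 0) (b := 1) (C := 1)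
    (f := fun t => d1 C t v ^ 2) <| by
    filter_upwards [volume.ae_ne 1] with t ht1 ht
    rw [uIoc_of_le zero_le_one] at ht
    obtain ⟨h0, h1⟩ := hC.d1_mem_Icc ⟨ht.1, lt_of_le_of_ne ht.2 ht1⟩ hv
    rw [norm_pow, Real.norm_of_nonneg h0]
    exact pow_le_one₀ h0 h1

/-- `d1 C` is arbitrary off the unit square, so measurability in `v` goes through the continuous
extension `C ∘ (projIcc × projIcc)`, whose partial derivative is jointly measurable. -/
lemma aestronglyMeasurable_integral_d1_sq (hC : IsCopula C) :
    AEStronglyMeasurable (fun v => ∫ t in (0:ℝ)..1, d1 C t v ^ 2) (volume.restrict (Ioc 0 1)) := by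
  set E : ℝ → ℝ → ℝ := fun v t =>
    C (projIcc (0:ℝ) 1 zero_le_one t) (projIcc (0:ℝ) 1 zero_le_one v)
  have hE : Continuous (uncurry E) :=
    hC.continuousOn_uncurry.comp_continuous (α := ℝ × ℝ)
      (f := fun p => ((projIcc (0:ℝ) 1 zero_le_one p.2 : ℝ), (projIcc (0:ℝ) 1 zero_le_one p.1 : ℝ)))
      (by fun_prop) fun p =>
      ⟨(projIcc (0:ℝ) 1 zero_le_one p.2).2, (projIcc (0:ℝ) 1 zero_le_one p.1).2⟩
  have hm : StronglyMeasurable fun v => ∫ t in Ioc (0:ℝ) 1, deriv (E v) t ^ 2 :=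
    ((stronglyMeasurable_deriv_with_param hE).pow 2).integral_prod_right'
  refine hm.aestronglyMeasurable.congr <| ae_restrict_of_forall_mem measurableSet_Ioc
    fun v hv => ?_
  dsimp only
  rw [← integral_of_le zero_le_one]
  refine integral_congr_Ioo_of_le zero_le_one fun t ht => ?_
  have hloc : E v =ᶠ[𝓝 t] (C · v) := by
    filter_upwards [Ioo_mem_nhds ht.1 ht.2] with s hs
    simp only [E, projIcc_of_mem zero_le_one (Ioo_subset_Icc_self hs),
      projIcc_of_mem zero_le_one (Ioc_subset_Icc_self hv)]
  simp only [d1, hloc.deriv_eq]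

lemma intervalIntegrable_integral_d1_sq (hC : IsCopula C) :
    IntervalIntegrable (fun v => ∫ t in (0:ℝ)..1, d1 C t v ^ 2) volume 0 1 := by
  rw [intervalIntegrable_iff_integrableOn_Ioc_of_le zero_le_one]
  exact Integrable.of_bound hC.aestronglyMeasurable_integral_d1_sq 1 <|
    ae_restrict_of_forall_mem measurableSet_Ioc fun v hv =>
      hC.norm_integral_d1_sq_le (Ioc_subset_Icc_self hv)

end IsCopula

/-- Lower boundary estimate: for `0 ≤ μ ≤ 2` and any bivariate copula `C`,
`μ·ψ(C) + ξ(C)` is bounded below by the corresponding value of the family `C↘_μ`,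
with `v₁ = 2/(2+μ)`. -/
theorem lower_boundary_estimate (μ : ℝ) (hμ : μ ∈ Icc (0:ℝ) 2)
    (C : ℝ → ℝ → ℝ) (hC : IsCopula C) :
    μ * psi C + xi C ≥
      μ * (-2 * (2 / (2 + μ)) ^ 2 + 6 * (2 / (2 + μ)) - 5 + 1 / (2 / (2 + μ))) +
        (-4 * (2 / (2 + μ)) ^ 2 + 20 * (2 / (2 + μ)) - 17 + 2 / (2 / (2 + μ))
          - 1 / (2 / (2 + μ)) ^ 2 - 12 * Real.log (2 / (2 + μ))) := by
  have hdiag : IntervalIntegrable (fun v => C v v) volume 0 1 :=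
    (uIcc_of_le (zero_le_one' ℝ) ▸ hC.monotoneOn_diag).intervalIntegrable
  have hle := integral_mono_on zero_le_one (intervalIntegrable_extremalIntegrand hμ)
    ((hdiag.const_mul μ).add hC.intervalIntegrable_integral_d1_sq)
    fun v hv => hC.extremalIntegrand_le hμ hv
  rw [integral_add (hdiag.const_mul μ) hC.intervalIntegrable_integral_d1_sq,
    intervalIntegral.integral_const_mul] at hle
  rw [← integral_extremalIntegrand hμ, psi, xi]
  linarith
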